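/- arXiv:2012.12953 — 2 statements merged into one kernel-verified Lean document; each statement's English description precedes it below -/
import Mathlib

section
/- Let H be a self-adjoint operator on a Hilbert space with smallest eigenvalue 0, eigenprojection P(0) of dimension N, and spectral gap ΔE > 0 (i.e., the spectrum of H is contained in {0} ∪ [ΔE, ∞)). For q > 0 define ρ^q := (1/(N√(2πq))) ∫_{-∞}^{∞} exp(iHt) exp(-t²/(2q)) dt (in the weak sense via the spectral measure). Then ‖ρ^q − P₀‖ ≤ (1/N)·exp(−(ΔE)²q/2) in operator norm, where P₀ = (1/N)·P(0). -/
/-!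
Fubini and the Fourier transform of the Gaussian turn the quadratic form of `ρ^q` into
`(1/N) ∫ e^{-λ²q/2} dP_ψ(λ)`, so `⟪ψ, (ρ^q - P₀) ψ⟫ = (1/N) ∫ (e^{-λ²q/2} - 1_{0}(λ)) dP_ψ(λ)`.
The integrand vanishes at `0` and is at most `e^{-(ΔE)²q/2}` on `[ΔE, ∞)`, which carries the
rest of `P_ψ`. Being real, this quadratic form comes from a self-adjoint operator, whose norm is
the supremum of `|⟪ψ, (ρ^q - P₀) ψ⟫|` over unit vectors.
-/

open MeasureTheory
open scoped InnerProductSpace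

theorem ContinuousLinearMap.norm_le_of_norm_inner_map_self_le {𝕜 F : Type*} [RCLike 𝕜]
    [NormedAddCommGroup F] [InnerProductSpace 𝕜 F] {T : F →L[𝕜] F}
    (hT : (T : F →ₗ[𝕜] F).IsSymmetric) {C : ℝ} (hC : 0 ≤ C)
    (hTC : ∀ x, ‖⟪T x, x⟫_𝕜‖ ≤ C * ‖x‖ ^ 2) : ‖T‖ ≤ C := by
  rw [T.norm_eq_iSup_rayleighQuotient hT]
  refine ciSup_le fun x => ?_
  rcases eq_or_ne x 0 with rfl | hx
  · simpa using hC
  rw [rayleighQuotient, reApplyInnerSelf_apply, abs_div, abs_sq, div_le_iff₀ (by positivity)]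
  exact (RCLike.abs_re_le_norm _).trans (hTC x)

theorem integral_exp_neg_sq_div_mul_cexp {q : ℝ} (hq : 0 < q) (lam : ℝ) :
    ∫ t : ℝ, (Real.exp (-t ^ 2 / (2 * q)) : ℂ) * Complex.exp (Complex.I * lam * t)
      = Real.sqrt (2 * Real.pi * q) * Real.exp (-lam ^ 2 * q / 2) := by
  have hchar := ProbabilityTheory.charFun_gaussianReal (μ := 0) (v := q.toNNReal) lam
  rw [charFun_apply_real, ProbabilityTheory.integral_gaussianReal_eq_integral_smul
    (by simpa using hq)] at hchar
  simp only [ProbabilityTheory.gaussianPDFReal, Real.coe_toNNReal _ hq.le, sub_zero,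
    Complex.real_smul, Complex.ofReal_mul, Complex.ofReal_inv, mul_assoc,
    integral_const_mul] at hchar
  have hsqrt : (Real.sqrt (2 * Real.pi * q) : ℂ) ≠ 0 := by
    exact_mod_cast (Real.sqrt_pos.mpr (by positivity)).ne'
  rw [← mul_assoc, inv_mul_eq_iff_eq_mul₀ hsqrt] at hchar
  have hcomm (t : ℝ) : Complex.I * lam * t = lam * (t * Complex.I) := by ring
  simp_rw [hcomm, hchar, Complex.ofReal_exp]
  push_cast
  ring_nf

theorem integrable_exp_neg_sq_div {q : ℝ} (hq : 0 < q) :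
    Integrable fun t : ℝ => Real.exp (-t ^ 2 / (2 * q)) := by
  have hform (t : ℝ) : -t ^ 2 / (2 * q) = -(2 * q)⁻¹ * t ^ 2 := by ring
  simpa only [hform] using integrable_exp_neg_mul_sq (inv_pos.mpr (by positivity : 0 < 2 * q))

theorem abs_exp_sub_indicator_le {q ΔE lam : ℝ} (hq : 0 ≤ q) (hΔE : 0 < ΔE)
    (hlam : lam ∈ ({0} ∪ Set.Ici ΔE : Set ℝ)) :
    |Real.exp (-lam ^ 2 * q / 2) - Set.indicator {0} 1 lam| ≤ Real.exp (-ΔE ^ 2 * q / 2) := by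
  rcases hlam with rfl | hlam
  · simpa using (Real.exp_pos _).le
  have hlam0 : lam ∉ ({0} : Set ℝ) := (hΔE.trans_le hlam).ne'
  rw [Set.indicator_of_notMem hlam0, sub_zero, abs_of_pos (Real.exp_pos _), Real.exp_le_exp]
  have : ΔE ^ 2 ≤ lam ^ 2 := pow_le_pow_left₀ hΔE.le hlam 2
  nlinarith

theorem integral_ofReal_exp_sub_indicator {ν : Measure ℝ} [IsFiniteMeasure ν] {q : ℝ}
    (hq : 0 ≤ q) :
    ∫ lam, ((Real.exp (-lam ^ 2 * q / 2) - Set.indicator {0} 1 lam : ℝ) : ℂ) ∂ν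
      = ∫ lam, (Real.exp (-lam ^ 2 * q / 2) : ℂ) ∂ν - ∫ lam, Set.indicator {0} 1 lam ∂ν := by
  have hind (lam : ℝ) : ((Set.indicator {0} 1 lam : ℝ) : ℂ) = Set.indicator {0} 1 lam := by
    by_cases h : lam = 0 <;> simp [h]
  have hexp_int : Integrable (fun lam : ℝ => (Real.exp (-lam ^ 2 * q / 2) : ℂ)) ν :=
    .of_bound (by fun_prop) 1 (.of_forall fun lam => by
      rw [Complex.norm_real, Real.norm_of_nonneg (Real.exp_pos _).le, Real.exp_le_one_iff]
      nlinarith [sq_nonneg lam])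
  have hind_int : Integrable (fun lam : ℝ => (Set.indicator {0} 1 lam : ℂ)) ν :=
    (integrable_const 1).indicator (measurableSet_singleton 0)
  simp_rw [Complex.ofReal_sub, hind]
  exact integral_sub hexp_int hind_int

section SpectralMeasures

variable {V : Type*} [NormedAddCommGroup V] [InnerProductSpace ℂ V] {μ : V → Measure ℝ}

theorem norm_le_of_inner_map_self_eq_integral
    (hμ : ∀ ψ, μ ψ Set.univ ≤ ENNReal.ofReal (‖ψ‖ ^ 2)) {T : V →L[ℂ] V} {r : ℝ → ℝ}
    (hT : ∀ ψ, ⟪ψ, T ψ⟫_ℂ = ∫ lam, (r lam : ℂ) ∂μ ψ) {C : ℝ} (hC : 0 ≤ C)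
    (hrC : ∀ ψ, ∀ᵐ lam ∂μ ψ, |r lam| ≤ C) : ‖T‖ ≤ C := by
  have hreal (ψ : V) : ⟪T ψ, ψ⟫_ℂ = ((∫ lam, r lam ∂μ ψ : ℝ) : ℂ) := by
    rw [← inner_conj_symm, hT, integral_complex_ofReal, Complex.conj_ofReal]
  refine T.norm_le_of_norm_inner_map_self_le ?_ hC fun ψ => ?_
  · rw [LinearMap.isSymmetric_iff_inner_map_self_real]
    intro ψ
    simp only [ContinuousLinearMap.coe_coe, hreal, Complex.conj_ofReal]
  · have : IsFiniteMeasure (μ ψ) := ⟨(hμ ψ).trans_lt ENNReal.ofReal_lt_top⟩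
    rw [hreal, Complex.norm_real]
    calc ‖∫ lam, r lam ∂μ ψ‖ ≤ C * (μ ψ).real Set.univ :=
          norm_integral_le_of_norm_le_const (hrC ψ)
      _ ≤ C * ‖ψ‖ ^ 2 :=
          mul_le_mul_of_nonneg_left (ENNReal.toReal_le_of_le_ofReal (by positivity) (hμ ψ)) hC

theorem inner_integral_smul_cexp_apply [CompleteSpace V] {Φ : (ℝ → ℂ) → (V →L[ℂ] V)}
    (hμ : ∀ ψ, μ ψ Set.univ ≤ ENNReal.ofReal (‖ψ‖ ^ 2))
    (hΦ : ∀ f : ℝ → ℂ, Measurable f → (∀ lam, ‖f lam‖ ≤ 1) →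
      ∀ ψ : V, ⟪ψ, Φ f ψ⟫_ℂ = ∫ lam, f lam ∂(μ ψ))
    {w : ℝ → ℝ} (hw : Integrable w)
    (hInt : Integrable fun t : ℝ => w t • Φ fun lam => Complex.exp (Complex.I * lam * t))
    (ψ : V) :
    ⟪ψ, (∫ t, w t • Φ fun lam => Complex.exp (Complex.I * lam * t)) ψ⟫_ℂ
      = ∫ lam : ℝ, (∫ t, (w t : ℂ) * Complex.exp (Complex.I * lam * t)) ∂(μ ψ) := by
  have : IsFiniteMeasure (μ ψ) := ⟨(hμ ψ).trans_lt ENNReal.ofReal_lt_top⟩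
  have hnorm (lam t : ℝ) : ‖Complex.exp (Complex.I * lam * t)‖ = 1 := by
    rw [mul_assoc, ← Complex.ofReal_mul, Complex.norm_exp_I_mul_ofReal]
  have hpt (t : ℝ) : ⟪ψ, (w t • Φ fun lam => Complex.exp (Complex.I * lam * t)) ψ⟫_ℂ
      = ∫ lam, (w t : ℂ) * Complex.exp (Complex.I * lam * t) ∂(μ ψ) := by
    rw [smul_apply, ← Complex.coe_smul, inner_smul_right,
      hΦ _ (by fun_prop) (fun lam => (hnorm lam t).le), integral_const_mul]
  have hprod : Integrable (Function.uncurry fun (t lam : ℝ) =>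
      (w t : ℂ) * Complex.exp (Complex.I * lam * t)) (volume.prod (μ ψ)) := by
    refine (hw.norm.mul_prod (integrable_const (1 : ℝ))).mono' ?_ ?_
    · exact (Complex.continuous_ofReal.comp_aestronglyMeasurable
        hw.aestronglyMeasurable.comp_fst).mul (by fun_prop)
    · refine Filter.Eventually.of_forall fun p => ?_
      simp [Function.uncurry, hnorm]
  rw [ContinuousLinearMap.integral_apply hInt, ← integral_inner (hInt.apply_continuousLinearMap ψ),
    integral_congr_ae (Filter.Eventually.of_forall hpt), integral_integral_swap hprod]

theorem inner_gaussian_smoothing_apply [CompleteSpace V] {Φ : (ℝ → ℂ) → (V →L[ℂ] V)}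
    (hμ : ∀ ψ, μ ψ Set.univ ≤ ENNReal.ofReal (‖ψ‖ ^ 2))
    (hΦ : ∀ f : ℝ → ℂ, Measurable f → (∀ lam, ‖f lam‖ ≤ 1) →
      ∀ ψ : V, ⟪ψ, Φ f ψ⟫_ℂ = ∫ lam, f lam ∂(μ ψ))
    {q : ℝ} (hq : 0 < q)
    (hInt : Integrable fun t : ℝ =>
      Real.exp (-t ^ 2 / (2 * q)) • Φ fun lam => Complex.exp (Complex.I * lam * t))
    (ψ : V) :
    ⟪ψ, (∫ t, Real.exp (-t ^ 2 / (2 * q)) •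
        Φ fun lam => Complex.exp (Complex.I * lam * t)) ψ⟫_ℂ
      = Real.sqrt (2 * Real.pi * q) * ∫ lam, (Real.exp (-lam ^ 2 * q / 2) : ℂ) ∂μ ψ := by
  rw [inner_integral_smul_cexp_apply hμ hΦ (integrable_exp_neg_sq_div hq) hInt]
  simp_rw [integral_exp_neg_sq_div_mul_cexp hq, integral_const_mul]

end SpectralMeasures

variable {E : Type*} [NormedAddCommGroup E] [InnerProductSpace ℂ E] [CompleteSpace E]

theorem gsp_gaussian_smoothing_general
    (Φ : (ℝ → ℂ) → (E →L[ℂ] E))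
    (μ : E → Measure ℝ)
    (hμfin : ∀ ψ, μ ψ Set.univ = ENNReal.ofReal (‖ψ‖ ^ 2))
    (hmeas : ∀ f : ℝ → ℂ, Measurable f → (∀ lam, ‖f lam‖ ≤ 1) →
      ∀ ψ : E, ⟪ψ, Φ f ψ⟫_ℂ = ∫ lam, f lam ∂(μ ψ))
    (ΔE : ℝ) (hΔE : 0 < ΔE)
    (hgap : ∀ ψ, μ ψ (({0} ∪ Set.Ici ΔE)ᶜ) = 0)
    (N : ℕ)
    (P₀ : E →L[ℂ] E)
    (hP₀ : P₀ = ((N : ℂ))⁻¹ • Φ (Set.indicator {(0 : ℝ)} 1))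
    (q : ℝ) (hq : 0 < q)
    (hInt : Integrable (fun t : ℝ =>
      Real.exp (-(t ^ 2) / (2 * q)) •
        Φ (fun lam => Complex.exp (Complex.I * lam * t))))
    (ρq : E →L[ℂ] E)
    (hρq : ρq = ((N : ℂ) * (Real.sqrt (2 * Real.pi * q) : ℂ))⁻¹ •
      ∫ t : ℝ, Real.exp (-(t ^ 2) / (2 * q)) •
        Φ (fun lam => Complex.exp (Complex.I * lam * t))) :
    ‖ρq - P₀‖ ≤ (1 / (N : ℝ)) * Real.exp (-ΔE ^ 2 * q / 2) := by
  have hμ ψ := (hμfin ψ).le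
  have hρψ (ψ : E) : ⟪ψ, ρq ψ⟫_ℂ = (N : ℂ)⁻¹ * ∫ lam, (Real.exp (-lam ^ 2 * q / 2) : ℂ) ∂μ ψ := by
    have hsqrt : (Real.sqrt (2 * Real.pi * q) : ℂ) ≠ 0 := by
      exact_mod_cast (Real.sqrt_pos.mpr (by positivity)).ne'
    rw [hρq, smul_apply, inner_smul_right, inner_gaussian_smoothing_apply hμ hmeas hq hInt]
    field_simp
  have hP₀ψ (ψ : E) : ⟪ψ, P₀ ψ⟫_ℂ = (N : ℂ)⁻¹ * ∫ lam, Set.indicator {0} 1 lam ∂μ ψ := by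
    rw [hP₀, smul_apply, inner_smul_right, hmeas _ (measurable_one.indicator
      (measurableSet_singleton 0)) (fun lam => by by_cases h : lam = 0 <;> simp [h]) ψ]
  have hspec (ψ : E) : ∀ᵐ lam ∂μ ψ, lam ∈ ({0} ∪ Set.Ici ΔE : Set ℝ) := mem_ae_iff.mpr (hgap ψ)
  refine norm_le_of_inner_map_self_eq_integral hμ
    (r := fun lam => (N : ℝ)⁻¹ * (Real.exp (-lam ^ 2 * q / 2) - Set.indicator {0} 1 lam))
    (fun ψ => ?_) (by positivity) (fun ψ => (hspec ψ).mono fun lam hlam => ?_)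
  · have : IsFiniteMeasure (μ ψ) := ⟨(hμ ψ).trans_lt ENNReal.ofReal_lt_top⟩
    simp only [Complex.ofReal_mul, Complex.ofReal_inv, Complex.ofReal_natCast]
    rw [sub_apply, inner_sub_right, hρψ, hP₀ψ, ← mul_sub, integral_const_mul,
      integral_ofReal_exp_sub_indicator hq.le]
  · rw [abs_mul, abs_inv, Nat.abs_cast, one_div]
    exact mul_le_mul_of_nonneg_left (abs_exp_sub_indicator_le hq.le hΔE hlam) (by positivity)

/-- Gaussian smoothing of the ground state projection. `Φ` encodes the Borel
functional calculus of a self-adjoint operator `H` (a unital star-algebra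
homomorphism), `μ ψ = ⟨ψ, P(·)ψ⟩` its scalar spectral measures, supported in
`{0} ∪ [ΔE, ∞)` (spectral gap), `P₀ = (1/N)·P({0})` the normalized ground state
projection with `N`-dimensional ground eigenspace. Then the Gaussian smoothing
`ρ^q = (1/(N√(2πq))) ∫ e^{iHt} e^{−t²/(2q)} dt` satisfies
`‖ρ^q − P₀‖ ≤ (1/N)·e^{−(ΔE)²q/2}`. -/
theorem gsp_gaussian_smoothing
    (Φ : (ℝ → ℂ) → (E →L[ℂ] E))
    (hadd : ∀ f g, Φ (f + g) = Φ f + Φ g)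
    (hsmul : ∀ (c : ℂ) f, Φ (c • f) = c • Φ f)
    (hmul : ∀ f g, Φ (f * g) = Φ f * Φ g)
    (hstar : ∀ f, Φ (star f) = ContinuousLinearMap.adjoint (Φ f))
    (hone : Φ 1 = 1)
    (μ : E → Measure ℝ)
    (hμfin : ∀ ψ, μ ψ Set.univ = ENNReal.ofReal (‖ψ‖ ^ 2))
    (hmeas : ∀ f : ℝ → ℂ, Measurable f → (∀ lam, ‖f lam‖ ≤ 1) →
      ∀ ψ : E, ⟪ψ, Φ f ψ⟫_ℂ = ∫ lam, f lam ∂(μ ψ))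
    (ΔE : ℝ) (hΔE : 0 < ΔE)
    (hgap : ∀ ψ, μ ψ (({0} ∪ Set.Ici ΔE)ᶜ) = 0)
    (N : ℕ) (hN : 1 ≤ N)
    (P₀ : E →L[ℂ] E)
    (hrank : Module.finrank ℂ
      (LinearMap.range (Φ (Set.indicator {(0 : ℝ)} 1)).toLinearMap) = N)
    (hP₀ : P₀ = ((N : ℂ))⁻¹ • Φ (Set.indicator {(0 : ℝ)} 1))
    (q : ℝ) (hq : 0 < q)
    (hInt : Integrable (fun t : ℝ =>
      Real.exp (-(t ^ 2) / (2 * q)) •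
        Φ (fun lam => Complex.exp (Complex.I * lam * t))))
    (ρq : E →L[ℂ] E)
    (hρq : ρq = ((N : ℂ) * (Real.sqrt (2 * Real.pi * q) : ℂ))⁻¹ •
      ∫ t : ℝ, Real.exp (-(t ^ 2) / (2 * q)) •
        Φ (fun lam => Complex.exp (Complex.I * lam * t))) :
    ‖ρq - P₀‖ ≤ (1 / (N : ℝ)) * Real.exp (-ΔE ^ 2 * q / 2) :=
  gsp_gaussian_smoothing_general Φ μ hμfin hmeas ΔE hΔE hgap N P₀ hP₀ q hq hInt ρq hρq
end

section
/- Under the hypotheses of the previous statement, if moreover ‖[H, A]ψ₀‖ ≤ K for the unit ground state ψ₀ (with Hψ₀ = 0 and ⟨ψ₀, Aψ₀⟩ = 0), then ‖Ãψ₀‖ ≤ K·(ΔE)^{−1}·exp(−(ΔE)²q/2). -/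
/-!
Encode the spectral calculus of `H` as a star-algebra homomorphism `φ` from functions on `ℝ` to
operators. Positivity, `‖φ f x‖² = re ⟪x, φ (|f|²) x⟫`, makes `‖φ f x‖` monotone in `|f|` on the
spectrum. Differentiating `t ↦ e^{iHt} A ψ₀` at `0` gives `[H, A]ψ₀ = H A ψ₀`, and the Fourier
transform of the Gaussian turns the time average into `Ãψ₀ = e^{-qH²/2} A ψ₀`. As `Aψ₀` has no
ground-state component, `e^{-qH²/2} A ψ₀ = (H⁻¹ e^{-qH²/2}) [H, A]ψ₀`, and on the spectrum away
from `0` the function `λ⁻¹ e^{-qλ²/2}` is at most `ΔE⁻¹ e^{-qΔE²/2}`.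
-/

open MeasureTheory
open scoped InnerProductSpace

variable {E : Type*} [NormedAddCommGroup E] [InnerProductSpace ℂ E] [CompleteSpace E]

open Complex Set
open scoped BoundedContinuousFunction

theorem norm_cexp_I_mul_ofReal_mul_ofReal (l t : ℝ) : ‖cexp (I * l * t)‖ = 1 := by
  rw [mul_assoc, ← ofReal_mul, norm_exp_I_mul_ofReal]

theorem norm_cexp_I_mul_ofReal_sub_one_sub_le (x : ℝ) :
    ‖cexp (I * x) - 1 - I * x‖ ≤ 2 * x ^ 2 := by
  have hIx : ‖I * (x : ℂ)‖ = |x| := by simp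
  by_cases hx : |x| ≤ 1
  · calc ‖cexp (I * x) - 1 - I * x‖ ≤ ‖I * (x : ℂ)‖ ^ 2 :=
          norm_exp_sub_one_sub_id_le (hIx ▸ hx)
      _ ≤ 2 * x ^ 2 := by rw [hIx, sq_abs]; nlinarith [sq_nonneg x]
  · calc ‖cexp (I * x) - 1 - I * x‖ ≤ ‖cexp (I * x) - 1‖ + ‖I * (x : ℂ)‖ := norm_sub_le _ _
      _ ≤ |x| + |x| := by
          rw [hIx]
          gcongr
          simpa using Real.norm_exp_I_mul_ofReal_sub_one_le (x := x)
      _ ≤ 2 * x ^ 2 := by nlinarith [sq_abs x]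

/-- The character `l ↦ e^{ilt}` damped by `(1 + l²)⁻¹`: unlike the character itself it depends
continuously on `t` in the sup norm, so its time averages are Bochner integrals in `ℝ →ᵇ ℂ`. -/
noncomputable def dampedCharacter (t : ℝ) : ℝ →ᵇ ℂ :=
  .ofNormedAddCommGroup (fun l => cexp (I * l * t) / (1 + l ^ 2 : ℝ))
    ((by fun_prop : Continuous fun l : ℝ => cexp (I * l * t)).div (by fun_prop)
      fun l => ofReal_ne_zero.2 (by positivity)) 1
    fun l => by
      rw [norm_div, norm_cexp_I_mul_ofReal_mul_ofReal, norm_real,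
        Real.norm_of_nonneg (by positivity)]
      exact div_le_one_of_le₀ (by nlinarith [sq_nonneg l]) (by positivity)

theorem lipschitzWith_dampedCharacter : LipschitzWith 1 dampedCharacter := by
  refine LipschitzWith.of_dist_le_mul fun t s => ?_
  rw [NNReal.coe_one, one_mul, BoundedContinuousFunction.dist_le dist_nonneg]
  intro l
  have hw : (0 : ℝ) < 1 + l ^ 2 := by positivity
  have hcharacter : ‖cexp (I * l * t) - cexp (I * l * s)‖ ≤ |l| * |t - s| := by
    rw [show I * l * t = I * ↑(l * (t - s)) + I * l * s by push_cast; ring, exp_add, ← sub_one_mul,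
      norm_mul, norm_cexp_I_mul_ofReal_mul_ofReal, mul_one, ← abs_mul]
    exact Real.norm_exp_I_mul_ofReal_sub_one_le
  simp only [dampedCharacter, BoundedContinuousFunction.coe_ofNormedAddCommGroup, dist_eq_norm,
    ← sub_div, norm_div, norm_real, Real.norm_of_nonneg hw.le, Real.norm_eq_abs]
  have habs : |l| ≤ 1 + l ^ 2 := by nlinarith [sq_abs l, sq_nonneg (|l| - 1), abs_nonneg l]
  rw [div_le_iff₀ hw]
  exact hcharacter.trans (by nlinarith [abs_nonneg (t - s)])

theorem integral_gaussian_mul_cexp {q : ℝ} (hq : 0 < q) (l : ℝ) :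
    ∫ t : ℝ, (Real.exp (-(t ^ 2) / (2 * q)) : ℂ) * cexp (I * l * t)
      = (√(2 * Real.pi * q) : ℂ) * (Real.exp (-(q * l ^ 2) / 2) : ℂ) := by
  have hb : 0 < (((2 * q)⁻¹ : ℝ) : ℂ).re := by
    rw [ofReal_re]
    positivity
  have hfun : (fun t : ℝ => (Real.exp (-(t ^ 2) / (2 * q)) : ℂ) * cexp (I * l * t))
      = fun t : ℝ => cexp (I * l * t) * cexp (-((2 * q)⁻¹ : ℝ) * t ^ 2) := by
    ext t
    rw [ofReal_exp, mul_comm]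
    congr 2
    push_cast
    ring
  rw [hfun, fourierIntegral_gaussian hb, ← ofReal_div,
    show Real.pi / (2 * q)⁻¹ = 2 * Real.pi * q by field_simp,
    show (1 / 2 : ℂ) = ((1 / 2 : ℝ) : ℂ) by norm_num, ← ofReal_cpow (by positivity),
    ← Real.sqrt_eq_rpow, ofReal_exp]
  congr 2
  push_cast
  field_simp
  ring

theorem norm_inv_mul_gaussian_le {ΔE q l : ℝ} (hΔE : 0 < ΔE) (hq : 0 ≤ q)
    (hl : l ∈ ({0} ∪ Ici ΔE : Set ℝ)) :
    ‖(l : ℂ)⁻¹ * (Real.exp (-(q * l ^ 2) / 2) : ℂ)‖ ≤ ΔE⁻¹ * Real.exp (-ΔE ^ 2 * q / 2) := by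
  rcases hl with rfl | hl
  · simp only [ofReal_zero, inv_zero, zero_mul, norm_zero]
    positivity
  have hl0 : 0 < l := hΔE.trans_le hl
  rw [norm_mul, norm_inv, norm_real, norm_real, Real.norm_of_nonneg hl0.le,
    Real.norm_of_nonneg (Real.exp_pos _).le]
  gcongr
  · exact hl
  · nlinarith [mul_le_mul_of_nonneg_left (pow_le_pow_left₀ hΔE.le hl 2) hq]

def starAlgHomOfMap {X : Type*} (Φ : (X → ℂ) → (E →L[ℂ] E))
    (hadd : ∀ f g, Φ (f + g) = Φ f + Φ g) (hsmul : ∀ (c : ℂ) f, Φ (c • f) = c • Φ f)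
    (hmul : ∀ f g, Φ (f * g) = Φ f * Φ g)
    (hstar : ∀ f, Φ (star f) = ContinuousLinearMap.adjoint (Φ f)) (hone : Φ 1 = 1) :
    (X → ℂ) →⋆ₐ[ℂ] (E →L[ℂ] E) where
  toFun := Φ
  map_one' := hone
  map_mul' := hmul
  map_zero' := by simpa using hsmul 0 0
  map_add' := hadd
  commutes' c := by simp [Algebra.algebraMap_eq_smul_one, hsmul, hone]
  map_star' := by simpa [ContinuousLinearMap.star_eq_adjoint] using hstar

namespace StarAlgHom

section FunctionAlgebra

variable {X : Type*} (φ : (X → ℂ) →⋆ₐ[ℂ] (E →L[ℂ] E))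

def SupportedOn (S : Set X) : Prop := ∀ f g : X → ℂ, S.EqOn f g → φ f = φ g

theorem supportedOn_univ : φ.SupportedOn univ :=
  fun _ _ h => congrArg φ (funext fun l => h (mem_univ l))

theorem norm_apply_sq (f : X → ℂ) (x : E) : ‖φ f x‖ ^ 2 = re ⟪x, φ (star f * f) x⟫_ℂ := by
  rw [map_mul, map_star, ContinuousLinearMap.star_eq_adjoint,
    ContinuousLinearMap.apply_norm_sq_eq_inner_adjoint_right]
  rfl

theorem norm_apply_le_norm_apply {S : Set X} (hφ : φ.SupportedOn S) {f g : X → ℂ}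
    (hfg : ∀ l ∈ S, ‖f l‖ ≤ ‖g l‖) (x : E) : ‖φ f x‖ ≤ ‖φ g x‖ := by
  let r : X → ℂ := fun l => (√(‖g l‖ ^ 2 - ‖f l‖ ^ 2) : ℝ)
  have hsplit : φ (star g * g) = φ (star f * f) + φ (star r * r) := by
    rw [← map_add]
    refine hφ _ _ fun l hl => ?_
    have hsq : ‖f l‖ ^ 2 ≤ ‖g l‖ ^ 2 := pow_le_pow_left₀ (norm_nonneg _) (hfg l hl) 2
    simp only [Pi.mul_apply, Pi.add_apply, Pi.star_apply, RCLike.star_def, conj_mul', r,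
      norm_real, Real.norm_of_nonneg (Real.sqrt_nonneg _)]
    rw [← ofReal_pow, ← ofReal_pow, ← ofReal_pow, Real.sq_sqrt (sub_nonneg.2 hsq)]
    push_cast
    ring
  have h := φ.norm_apply_sq g x
  rw [hsplit, add_apply, inner_add_right, add_re, ← φ.norm_apply_sq,
    ← φ.norm_apply_sq] at h
  exact pow_le_pow_iff_left₀ (norm_nonneg _) (norm_nonneg _) two_ne_zero |>.1
    (by nlinarith [sq_nonneg ‖φ r x‖])

theorem norm_apply_le_of_forall_norm_le {S : Set X} (hφ : φ.SupportedOn S) {f : X → ℂ} {M : ℝ}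
    (hM : 0 ≤ M) (hf : ∀ l ∈ S, ‖f l‖ ≤ M) (x : E) : ‖φ f x‖ ≤ M * ‖x‖ := by
  have hconst : φ (fun _ => (M : ℂ)) = (M : ℂ) • 1 := by
    rw [← Algebra.algebraMap_eq_smul_one, ← φ.commutes]
    rfl
  calc ‖φ f x‖ ≤ ‖φ (fun _ => (M : ℂ)) x‖ :=
        φ.norm_apply_le_norm_apply hφ (fun l hl => by simpa [abs_of_nonneg hM] using hf l hl) x
    _ = M * ‖x‖ := by simp [hconst, norm_smul, abs_of_nonneg hM]

theorem apply_eq_smul_of_indicator_apply_eq_self {a : X} {ψ : E}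
    (hψ : φ (Set.indicator {a} 1) ψ = ψ) (f : X → ℂ) : φ f ψ = f a • ψ := by
  have hloc : f * Set.indicator {a} 1 = f a • Set.indicator {a} 1 := by
    ext l
    by_cases hl : l = a <;> simp [hl]
  rw [← hψ, ← mul_apply_eq_comp, ← map_mul, hloc, map_smul, smul_apply]

noncomputable def boundedApply [TopologicalSpace X] (y : E) : (X →ᵇ ℂ) →L[ℂ] E :=
  LinearMap.mkContinuous
    { toFun := fun f => φ f y
      map_add' := fun f g => by simp
      map_smul' := fun c f => by
        change φ (c • ⇑f) y = c • φ f y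
        rw [map_smul, smul_apply] }
    ‖y‖ fun f => by
      rw [mul_comm]
      exact φ.norm_apply_le_of_forall_norm_le φ.supportedOn_univ (norm_nonneg f)
        (fun l _ => f.norm_coe_le_norm l) y

theorem boundedApply_apply [TopologicalSpace X] (y : E) (f : X →ᵇ ℂ) :
    φ.boundedApply y f = φ f y :=
  rfl

end FunctionAlgebra

section Real

variable (φ : (ℝ → ℂ) →⋆ₐ[ℂ] (E →L[ℂ] E))

theorem hasDerivAt_apply_cexp (y : E) (t : ℝ) :
    HasDerivAt (fun s : ℝ => φ (fun l => cexp (I * l * s)) y)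
      (I • φ (fun l => l * cexp (I * l * t)) y) t := by
  rw [hasDerivAt_iff_isLittleO_nhds_zero]
  refine Asymptotics.IsBigO.trans_isLittleO ?_ (Asymptotics.isLittleO_pow_id one_lt_two)
  refine Asymptotics.IsBigO.of_bound (2 * ‖φ (fun l => (l : ℂ) ^ 2) y‖)
    (Filter.Eventually.of_forall fun h => ?_)
  have hrem : (fun l : ℝ => cexp (I * l * ↑(t + h))) - (fun l : ℝ => cexp (I * l * t))
      - ((h : ℂ) * I) • (fun l : ℝ => l * cexp (I * l * t))
      = fun l : ℝ => cexp (I * l * t) * (cexp (I * ↑(l * h)) - 1 - I * ↑(l * h)) := by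
    ext l
    simp only [Pi.sub_apply, Pi.smul_apply, smul_eq_mul]
    push_cast
    rw [show I * l * (t + h) = I * l * t + I * (l * h) by ring, exp_add]
    ring
  have hbound : ‖φ (fun l => cexp (I * l * t) * (cexp (I * ↑(l * h)) - 1 - I * ↑(l * h))) y‖
      ≤ ‖φ ((2 * h ^ 2 : ℂ) • fun l : ℝ => (l : ℂ) ^ 2) y‖ := by
    refine φ.norm_apply_le_norm_apply φ.supportedOn_univ (fun l _ => ?_) y
    rw [norm_mul, norm_cexp_I_mul_ofReal_mul_ofReal, one_mul]
    calc _ ≤ 2 * (l * h) ^ 2 := norm_cexp_I_mul_ofReal_sub_one_sub_le _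
      _ = ‖(2 * h ^ 2 : ℂ) * (l : ℂ) ^ 2‖ := by
          norm_cast
          rw [Real.norm_of_nonneg (by positivity)]
          ring
  rw [← hrem, map_sub, map_sub, map_smul, sub_apply, sub_apply, smul_apply] at hbound
  rw [RCLike.real_smul_eq_coe_smul (K := ℂ), smul_smul]
  refine hbound.trans_eq ?_
  rw [map_smul, smul_apply, norm_smul, norm_mul, norm_pow, norm_pow, norm_real]
  norm_num
  ring

theorem apply_id_eq_of_hasDerivAt {y z : E}
    (h : HasDerivAt (fun s : ℝ => φ (fun l => cexp (I * l * s)) y) (I • z) 0) :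
    φ (fun l => (l : ℂ)) y = z := by
  have h' := (φ.hasDerivAt_apply_cexp y 0).unique h
  simp only [ofReal_zero, mul_zero, exp_zero, mul_one] at h'
  exact smul_right_injective E I_ne_zero h'

theorem integral_smul_apply_cexp {k : ℝ → ℂ} (hk : Integrable k) (y : E) :
    ∫ t, k t • φ (fun l => cexp (I * l * t)) y = φ (fun l => ∫ t, k t * cexp (I * l * t)) y := by
  let w : ℝ → ℂ := fun l => (1 + l ^ 2 : ℝ)
  have hw : ∀ l, w l ≠ 0 := fun l => ofReal_ne_zero.2 (by positivity)
  let L : (ℝ →ᵇ ℂ) →L[ℂ] E := (φ w).comp (φ.boundedApply y)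
  have hL : ∀ f : ℝ →ᵇ ℂ, L f = φ (w * f) y := fun f => by
    simp [L, boundedApply_apply, map_mul, mul_apply_eq_comp]
  have hint : Integrable fun t => k t • dampedCharacter t :=
    hk.smul_bdd 1 lipschitzWith_dampedCharacter.continuous.aestronglyMeasurable
      (Filter.Eventually.of_forall fun t => BoundedContinuousFunction.norm_ofNormedAddCommGroup_le
        _ zero_le_one _)
  have hintegral : ∀ l, (∫ t, k t • dampedCharacter t) l = (∫ t, k t * cexp (I * l * t)) / w l := by
    intro l
    rw [← BoundedContinuousFunction.evalCLM_apply ℂ,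
      ← ContinuousLinearMap.integral_comp_comm _ hint, ← integral_div]
    simp [dampedCharacter, w, mul_div_assoc]
  calc ∫ t, k t • φ (fun l => cexp (I * l * t)) y = ∫ t, L (k t • dampedCharacter t) := by
        congr 1
        ext t
        rw [map_smul, hL]
        congr 3
        ext l
        simp only [Pi.mul_apply, dampedCharacter,
          BoundedContinuousFunction.coe_ofNormedAddCommGroup]
        rw [mul_div_cancel₀ _ (hw l)]
    _ = L (∫ t, k t • dampedCharacter t) := ContinuousLinearMap.integral_comp_comm L hint
    _ = φ (fun l => ∫ t, k t * cexp (I * l * t)) y := by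
        rw [hL]
        congr 2
        ext l
        rw [Pi.mul_apply, hintegral, mul_div_cancel₀ _ (hw l)]

theorem integral_gaussian_smul_apply_cexp {q : ℝ} (hq : 0 < q) (y : E) :
    ∫ t, Real.exp (-(t ^ 2) / (2 * q)) • φ (fun l => cexp (I * l * t)) y
      = (√(2 * Real.pi * q) : ℂ) • φ (fun l => (Real.exp (-(q * l ^ 2) / 2) : ℂ)) y := by
  have hk : Integrable fun t : ℝ => Real.exp (-(t ^ 2) / (2 * q)) := by
    convert integrable_exp_neg_mul_sq (b := (2 * q)⁻¹) (by positivity) using 3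
    ring
  have hk' : Integrable fun t : ℝ => (Real.exp (-(t ^ 2) / (2 * q)) : ℂ) := hk.ofReal
  simp_rw [← Complex.coe_smul, φ.integral_smul_apply_cexp hk',
    integral_gaussian_mul_cexp hq, ← smul_apply, ← map_smul]
  rfl

theorem apply_eq_apply_inv_mul_apply_id {y : E} (hy : φ (Set.indicator {0} 1) y = 0)
    (f : ℝ → ℂ) : φ f y = φ (fun l => (l : ℂ)⁻¹ * f l) (φ (fun l => (l : ℂ)) y) := by
  -- at `l = 0` the first summand vanishes because `(0 : ℂ)⁻¹ = 0`
  have hsplit : f = (fun l : ℝ => (l : ℂ)⁻¹ * f l) * (fun l : ℝ => (l : ℂ))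
      + f 0 • Set.indicator {0} 1 := by
    ext l
    by_cases hl : l = 0
    · simp [hl]
    · simp [hl, mul_right_comm _ (f l)]
  conv_lhs => rw [hsplit]
  rw [map_add, map_smul, add_apply, smul_apply, hy, smul_zero, add_zero, map_mul,
    mul_apply_eq_comp]

end Real

end StarAlgHom

theorem heisenberg_gaussian_average_norm_bound_general
    (Φ : (ℝ → ℂ) → (E →L[ℂ] E))
    (hadd : ∀ f g, Φ (f + g) = Φ f + Φ g)
    (hsmul : ∀ (c : ℂ) f, Φ (c • f) = c • Φ f)
    (hmul : ∀ f g, Φ (f * g) = Φ f * Φ g)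
    (hstar : ∀ f, Φ (star f) = ContinuousLinearMap.adjoint (Φ f))
    (hone : Φ 1 = 1)
    (S : Set ℝ)
    (hsupp : ∀ f g : ℝ → ℂ, Set.EqOn f g S → Φ f = Φ g)
    (ΔE : ℝ) (hΔE : 0 < ΔE) (hS : S ⊆ {0} ∪ Set.Ici ΔE)
    (ψ₀ : E) (hψ₀ : ‖ψ₀‖ = 1)
    (hGS : ∀ x : E, Φ (Set.indicator {(0 : ℝ)} 1) x = ⟪ψ₀, x⟫_ℂ • ψ₀)
    (A Cm : E →L[ℂ] E) (hA : ⟪ψ₀, A ψ₀⟫_ℂ = 0)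
    (hcomm : ∀ (ψ : E) (t : ℝ),
      HasDerivAt
        (fun τ => Φ (fun lam => Complex.exp (Complex.I * lam * τ))
          (A (Φ (fun lam => Complex.exp (-(Complex.I * lam * τ))) ψ)))
        (Φ (fun lam => Complex.exp (Complex.I * lam * t))
          (Complex.I • Cm (Φ (fun lam => Complex.exp (-(Complex.I * lam * t))) ψ))) t)
    (K : ℝ) (hK : ‖Cm ψ₀‖ ≤ K)
    (q : ℝ) (hq : 0 < q)
    (hInt : Integrable (fun t : ℝ =>
      Real.exp (-(t ^ 2) / (2 * q)) •
        (Φ (fun lam => Complex.exp (Complex.I * lam * t)) * A *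
          Φ (fun lam => Complex.exp (-(Complex.I * lam * t))))))
    (Atil : E →L[ℂ] E)
    (hAtil : Atil = ((Real.sqrt (2 * Real.pi * q) : ℂ))⁻¹ •
      ∫ t : ℝ, Real.exp (-(t ^ 2) / (2 * q)) •
        (Φ (fun lam => Complex.exp (Complex.I * lam * t)) * A *
          Φ (fun lam => Complex.exp (-(Complex.I * lam * t))))) :
    ‖Atil ψ₀‖ ≤ K * ΔE⁻¹ * Real.exp (-ΔE ^ 2 * q / 2) := by
  obtain ⟨φ, rfl⟩ : ∃ φ : (ℝ → ℂ) →⋆ₐ[ℂ] (E →L[ℂ] E), ⇑φ = Φ :=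
    ⟨starAlgHomOfMap Φ hadd hsmul hmul hstar hone, rfl⟩
  have hfix (τ : ℂ) : φ (fun lam => cexp (-(I * lam * τ))) ψ₀ = ψ₀ := by
    have hground : φ (Set.indicator {0} 1) ψ₀ = ψ₀ := by
      rw [hGS, inner_self_eq_norm_sq_to_K, hψ₀]
      simp
    simpa using φ.apply_eq_smul_of_indicator_apply_eq_self hground fun lam => cexp (-(I * lam * τ))
  have hCm : φ (fun l => (l : ℂ)) (A ψ₀) = Cm ψ₀ := by
    -- `hcomm` differentiates in a complex variable `τ`; restrict it to the real line
    have h := (hcomm ψ₀ 0).scomp (𝕜 := ℝ) 0 ofRealCLM.hasDerivAt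
    simp only [hfix, Function.comp_def, ofRealCLM_apply, ofReal_zero, ofReal_one, mul_zero,
      neg_zero, exp_zero, ← Pi.one_def, map_one, one_apply_eq_self, one_smul] at h
    exact φ.apply_id_eq_of_hasDerivAt h
  have hAtilψ₀ : Atil ψ₀ = φ (fun l => (Real.exp (-(q * l ^ 2) / 2) : ℂ)) (A ψ₀) := by
    have hsqrt : (√(2 * Real.pi * q) : ℂ) ≠ 0 := ofReal_ne_zero.2 (by positivity)
    rw [hAtil, smul_apply, ContinuousLinearMap.integral_apply hInt]
    simp only [smul_apply, mul_apply_eq_comp, hfix]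
    rw [φ.integral_gaussian_smul_apply_cexp hq, smul_smul, inv_mul_cancel₀ hsqrt, one_smul]
  have hproj : φ (Set.indicator {0} 1) (A ψ₀) = 0 := by rw [hGS, hA, zero_smul]
  rw [hAtilψ₀, φ.apply_eq_apply_inv_mul_apply_id hproj, hCm]
  calc _ ≤ ΔE⁻¹ * Real.exp (-ΔE ^ 2 * q / 2) * ‖Cm ψ₀‖ :=
        φ.norm_apply_le_of_forall_norm_le hsupp (by positivity)
          (fun l hl => norm_inv_mul_gaussian_le hΔE hq.le (hS hl)) _
    _ ≤ ΔE⁻¹ * Real.exp (-ΔE ^ 2 * q / 2) * K := by gcongr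
    _ = K * ΔE⁻¹ * Real.exp (-ΔE ^ 2 * q / 2) := by ring

/-- Quantitative bound for the Gaussian-averaged Heisenberg evolution on the ground
state. In the setting of the previous statement (self-adjoint `H` encoded by its Borel
functional calculus `Φ`, spectrum `S ⊆ {0} ∪ [ΔE, ∞)`, ground eigenprojection
`P({0}) = ⟨·,ψ₀⟩ψ₀`, bounded `A` with `⟨ψ₀, Aψ₀⟩ = 0`), if moreover the commutator
`[H,A]` extends to a bounded operator `Cm` (encoded via the derivative of the
Heisenberg evolution) with `‖[H,A]ψ₀‖ ≤ K`, then
`‖Ãψ₀‖ ≤ K·(ΔE)⁻¹·e^{−(ΔE)²q/2}`. -/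
theorem heisenberg_gaussian_average_norm_bound
    (Φ : (ℝ → ℂ) → (E →L[ℂ] E))
    (hadd : ∀ f g, Φ (f + g) = Φ f + Φ g)
    (hsmul : ∀ (c : ℂ) f, Φ (c • f) = c • Φ f)
    (hmul : ∀ f g, Φ (f * g) = Φ f * Φ g)
    (hstar : ∀ f, Φ (star f) = ContinuousLinearMap.adjoint (Φ f))
    (hone : Φ 1 = 1)
    (S : Set ℝ) (hSmeas : MeasurableSet S)
    (hsupp : ∀ f g : ℝ → ℂ, Set.EqOn f g S → Φ f = Φ g)
    (ΔE : ℝ) (hΔE : 0 < ΔE) (hS : S ⊆ {0} ∪ Set.Ici ΔE) (h0S : (0 : ℝ) ∈ S)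
    (ψ₀ : E) (hψ₀ : ‖ψ₀‖ = 1)
    (hGS : ∀ x : E, Φ (Set.indicator {(0 : ℝ)} 1) x = ⟪ψ₀, x⟫_ℂ • ψ₀)
    (A Cm : E →L[ℂ] E) (hA : ⟪ψ₀, A ψ₀⟫_ℂ = 0)
    (hcomm : ∀ (ψ : E) (t : ℝ),
      HasDerivAt
        (fun τ => Φ (fun lam => Complex.exp (Complex.I * lam * τ))
          (A (Φ (fun lam => Complex.exp (-(Complex.I * lam * τ))) ψ)))
        (Φ (fun lam => Complex.exp (Complex.I * lam * t))
          (Complex.I • Cm (Φ (fun lam => Complex.exp (-(Complex.I * lam * t))) ψ))) t)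
    (K : ℝ) (hK : ‖Cm ψ₀‖ ≤ K)
    (q : ℝ) (hq : 0 < q)
    (hInt : Integrable (fun t : ℝ =>
      Real.exp (-(t ^ 2) / (2 * q)) •
        (Φ (fun lam => Complex.exp (Complex.I * lam * t)) * A *
          Φ (fun lam => Complex.exp (-(Complex.I * lam * t))))))
    (Atil : E →L[ℂ] E)
    (hAtil : Atil = ((Real.sqrt (2 * Real.pi * q) : ℂ))⁻¹ •
      ∫ t : ℝ, Real.exp (-(t ^ 2) / (2 * q)) •
        (Φ (fun lam => Complex.exp (Complex.I * lam * t)) * A *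
          Φ (fun lam => Complex.exp (-(Complex.I * lam * t))))) :
    ‖Atil ψ₀‖ ≤ K * ΔE⁻¹ * Real.exp (-ΔE ^ 2 * q / 2) :=
  heisenberg_gaussian_average_norm_bound_general Φ hadd hsmul hmul hstar hone S hsupp ΔE hΔE hS ψ₀
    hψ₀ hGS A Cm hA hcomm K hK q hq hInt Atil hAtil
end
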